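/- There exists a feasible family (S, (φ_s), (η^s)) attaining the supremum of the single-type problem with |S| ≤ n such that every posterior η^s has at most 2·|A| nonzero coordinates, i.e., ‖η^s‖₀ ≤ 2|A| for all s ∈ S. -/

import Mathlib

open Finset
open scoped Classical

noncomputable section

/-- The probability simplex in `ℝ^n`. -/
def simplex (n : ℕ) : Set (Fin n → ℝ) :=
  {η | (∀ ω, 0 ≤ η ω) ∧ ∑ ω, η ω = 1}

variable {n : ℕ} {A : Type*} [Fintype A] [Nonempty A]

/-- `u*(ω) = max_{a ∈ A} u(ω, a)`. -/
def uStar (u : Fin n → A → ℝ) (ω : Fin n) : ℝ :=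
  Finset.univ.sup' Finset.univ_nonempty (u ω)

/-- The cost of uncertainty `C(η)`. -/
def Cost (u : Fin n → A → ℝ) (η : Fin n → ℝ) : ℝ :=
  ∑ ω, η ω * uStar u ω
    - Finset.univ.sup' Finset.univ_nonempty (fun a => ∑ ω, η ω * u ω a)

/-- The likelihood ratio `R(η) = Σ_ω μ_ω η_ω / θ_ω`. -/
def Ratio (μ θ η : Fin n → ℝ) : ℝ := ∑ ω, μ ω * η ω / θ ω

/-- The set of feasible objective values of the single-type problem. -/
def ConcaveSet (u : Fin n → A → ℝ) (μ θ : Fin n → ℝ) : Set ℝ :=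
  {v | ∃ (m : ℕ) (φ : Fin m → ℝ) (η : Fin m → Fin n → ℝ),
    (∀ s, 0 ≤ φ s) ∧ (∀ s, η s ∈ simplex n) ∧
    (∀ ω, ∑ s, φ s * η s ω = θ ω) ∧
    v = ∑ s, φ s * Ratio μ θ (η s) * Cost u (η s)}

/-! The objective `Σ_s φ_s R(η^s) C(η^s)` is linear in the weights, `R` is linear and
`C(η) = min_b Σ_ω η_ω (u*(ω) - u(ω, b))` is a minimum of `|A|` linear functions. The common
tool is that a point of a polytope `{x ≥ 0 | L x = L x₀}` (with bounded mass) is a convex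
combination of points with at most `rank L` nonzero coordinates.

Applied to a posterior and the `|A| + 2` functionals mass, `R` and the regrets, this splits every
posterior into posteriors with at most `2 |A|` nonzero coordinates on which `R · C` keeps its
value. Applied to the weights of a splitting and the `n` constraints `Σ_s φ_s η^s = θ`, it
reduces any splitting to at most `n` posteriors without lowering the objective; hence the
supremum is a maximum over the compact sets of splittings with at most `n` posteriors, and an
optimal splitting can be taken with sparse posteriors and at most `n` of them. -/

section Sparse

variable {ι E : Type*} [Fintype ι] [AddCommGroup E] [Module ℝ E] [FiniteDimensional ℝ E]

lemma exists_neg_of_sum_eq_zero {d : ι → ℝ} (hd : d ≠ 0) (hsum : ∑ i, d i = 0) :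
    ∃ i, d i < 0 := by
  by_contra! h
  exact hd <| funext fun i =>
    (Finset.sum_eq_zero_iff_of_nonneg fun i _ => h i).mp hsum i (mem_univ i)

lemma exists_ne_zero_map_eq_zero_of_finrank_lt (L : (ι → ℝ) →ₗ[ℝ] E) {x : ι → ℝ}
    (hx : Module.finrank ℝ E < #{i | x i ≠ 0}) :
    ∃ d ≠ 0, L d = 0 ∧ ∀ i, x i = 0 → d i = 0 := by
  let restrict := LinearMap.funLeft ℝ ℝ (Subtype.val : {i // x i = 0} → ι)
  have hcard : #{i | x i = 0} + #{i | x i ≠ 0} = Fintype.card ι :=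
    Finset.card_filter_add_card_filter_not _
  have hker : LinearMap.ker (L.prod restrict) ≠ ⊥ := by
    apply LinearMap.ker_ne_bot_of_finrank_lt
    rw [Module.finrank_prod, Module.finrank_fintype_fun_eq_card,
      Module.finrank_fintype_fun_eq_card, Fintype.card_subtype]
    omega
  obtain ⟨d, hd, hd0⟩ := (Submodule.ne_bot_iff _).mp hker
  rw [LinearMap.ker_prod, Submodule.mem_inf] at hd
  exact ⟨d, hd0, hd.1, fun i hi => congrFun hd.2 ⟨i, hi⟩⟩

lemma exists_pos_nonneg_add_smul_card_lt {x d : ι → ℝ} (hx : 0 ≤ x)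
    (hdx : ∀ i, x i = 0 → d i = 0) (hneg : ∃ i, d i < 0) :
    ∃ t : ℝ, 0 < t ∧ 0 ≤ x + t • d ∧ #{i | (x + t • d) i ≠ 0} < #{i | x i ≠ 0} := by
  obtain ⟨i₀, hi₀, hmin⟩ := Finset.exists_min_image {i | d i < 0} (fun i => x i / -d i)
    (by simpa [Finset.Nonempty] using hneg)
  have hd₀ : d i₀ < 0 := by simpa using hi₀
  have hx₀ : 0 < x i₀ := (hx i₀).lt_of_ne fun h => hd₀.ne (hdx i₀ h.symm)
  have ht : 0 < x i₀ / -d i₀ := div_pos hx₀ (neg_pos.mpr hd₀)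
  refine ⟨x i₀ / -d i₀, ht, fun i => ?_, ?_⟩
  · rcases le_or_gt 0 (d i) with hdi | hdi
    · have hxi : 0 ≤ x i := hx i
      have : 0 ≤ x i₀ / -d i₀ * d i := mul_nonneg ht.le hdi
      simp only [Pi.zero_apply, Pi.add_apply, Pi.smul_apply, smul_eq_mul]
      linarith
    · have h := hmin i (by simpa using hdi)
      rw [le_div_iff₀ (neg_pos.mpr hdi)] at h
      simp only [Pi.zero_apply, Pi.add_apply, Pi.smul_apply, smul_eq_mul]
      linarith
  · apply Finset.card_lt_card
    rw [Finset.ssubset_iff_of_subset]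
    · refine ⟨i₀, by simpa using hx₀.ne', ?_⟩
      simp only [Finset.mem_filter, mem_univ, true_and, not_not, Pi.add_apply, Pi.smul_apply,
        smul_eq_mul]
      rw [div_mul_eq_mul_div, div_neg, mul_div_cancel_right₀ _ hd₀.ne, add_neg_cancel]
    · intro i
      simp only [Finset.mem_filter, mem_univ, true_and]
      intro h hxi
      simp [hxi, hdx i hxi] at h

/-- If `x` has more than `finrank E` nonzero coordinates, some `d ≠ 0` in `ker L` is supported on
them, and `x` lies between the two points where the line `x + ℝ d` leaves the orthant, which have
fewer nonzero coordinates; `hL` makes the line leave the orthant in both directions. -/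
theorem mem_convexHull_nonneg_card_le (L : (ι → ℝ) →ₗ[ℝ] E)
    (hL : ∀ d, L d = 0 → ∑ i, d i = 0) {x : ι → ℝ} (hx : 0 ≤ x) :
    x ∈ convexHull ℝ {y | 0 ≤ y ∧ L y = L x ∧ #{i | y i ≠ 0} ≤ Module.finrank ℝ E} := by
  induction hk : #{i | x i ≠ 0} using Nat.strong_induction_on generalizing x with
  | _ k ih =>
  by_cases hsmall : k ≤ Module.finrank ℝ E
  · exact subset_convexHull ℝ _ ⟨hx, rfl, hk ▸ hsmall⟩
  obtain ⟨d, hd0, hLd, hdx⟩ := exists_ne_zero_map_eq_zero_of_finrank_lt L (hk ▸ not_le.mp hsmall)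
  have hsum : ∑ i, d i = 0 := hL d hLd
  obtain ⟨t₁, ht₁, hx₁, hk₁⟩ :=
    exists_pos_nonneg_add_smul_card_lt hx hdx (exists_neg_of_sum_eq_zero hd0 hsum)
  obtain ⟨t₂, ht₂, hx₂, hk₂⟩ := exists_pos_nonneg_add_smul_card_lt hx
    (fun i hi => by simp [hdx i hi]) (exists_neg_of_sum_eq_zero (neg_ne_zero.mpr hd0)
      (by simp [hsum]))
  have hL_add (t : ℝ) (d' : ι → ℝ) (hd' : L d' = 0) : L (x + t • d') = L x := by
    simp [hd']
  have h₁ := ih _ (hk ▸ hk₁) hx₁ rfl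
  have h₂ := ih _ (hk ▸ hk₂) hx₂ rfl
  rw [hL_add _ _ hLd] at h₁
  rw [hL_add _ _ (by simp [hLd])] at h₂
  have hx_eq : x = (t₂ / (t₁ + t₂)) • (x + t₁ • d) + (t₁ / (t₁ + t₂)) • (x + t₂ • -d) := by
    ext i
    simp only [Pi.add_apply, Pi.smul_apply, Pi.neg_apply, smul_eq_mul]
    field_simp
    ring
  have hpos : 0 < t₁ + t₂ := add_pos ht₁ ht₂
  have hmem := convex_convexHull ℝ _ h₁ h₂ (div_nonneg ht₂.le hpos.le) (div_nonneg ht₁.le hpos.le)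
    (by rw [← add_div, add_comm, div_self hpos.ne'])
  rwa [← hx_eq] at hmem

lemma exists_nonneg_card_le_le_apply (L : (ι → ℝ) →ₗ[ℝ] E)
    (hL : ∀ d, L d = 0 → ∑ i, d i = 0) (V : (ι → ℝ) →ₗ[ℝ] ℝ) {x : ι → ℝ} (hx : 0 ≤ x) :
    ∃ y, 0 ≤ y ∧ L y = L x ∧ #{i | y i ≠ 0} ≤ Module.finrank ℝ E ∧ V x ≤ V y := by
  by_contra! h
  have hsub : convexHull ℝ {y | 0 ≤ y ∧ L y = L x ∧ #{i | y i ≠ 0} ≤ Module.finrank ℝ E}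
      ⊆ {y | V y < V x} :=
    convexHull_min (fun y hy => h y hy.1 hy.2.1 hy.2.2) (convex_halfSpace_lt V.isLinear (V x))
  exact lt_irrefl (V x) (hsub (mem_convexHull_nonneg_card_le L hL hx))

lemma exists_fin_sum_mul_eq (y : ι → ℝ) :
    ∃ e : Fin #{i | y i ≠ 0} → ι, ∀ g : ι → ℝ, ∑ s, y (e s) * g (e s) = ∑ i, y i * g i := by
  let S : Finset ι := {i | y i ≠ 0}
  refine ⟨fun s => (S.equivFin.symm s : ι), fun g => ?_⟩
  refine (Equiv.sum_comp S.equivFin.symm (fun i => y i * g i)).trans ?_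
  rw [Finset.sum_coe_sort S (fun i => y i * g i),
    Finset.sum_filter_of_ne fun i _ h => left_ne_zero_of_mul h]

end Sparse

def weightedCost (u : Fin n → A → ℝ) (μ θ η : Fin n → ℝ) : ℝ := Ratio μ θ η * Cost u η

def IsSplitting {ι : Type*} [Fintype ι] (θ : Fin n → ℝ) (φ : ι → ℝ) (η : ι → Fin n → ℝ) :
    Prop :=
  (∀ s, 0 ≤ φ s) ∧ (∀ s, η s ∈ simplex n) ∧ ∀ ω, ∑ s, φ s * η s ω = θ ω

lemma mem_concaveSet_iff {u : Fin n → A → ℝ} {μ θ : Fin n → ℝ} {v : ℝ} :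
    v ∈ ConcaveSet u μ θ ↔ ∃ (m : ℕ) (φ : Fin m → ℝ) (η : Fin m → Fin n → ℝ),
      IsSplitting θ φ η ∧ v = ∑ s, φ s * weightedCost u μ θ (η s) := by
  simp only [ConcaveSet, IsSplitting, weightedCost, mul_assoc, and_assoc]; rfl

section Splitting

variable {ι : Type*} [Fintype ι] {θ : Fin n → ℝ} {φ : ι → ℝ} {η : ι → Fin n → ℝ}

lemma sum_sum_mul_of_mem_simplex (hη : ∀ s, η s ∈ simplex n) (d : ι → ℝ) :
    ∑ ω, ∑ s, d s * η s ω = ∑ s, d s := by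
  rw [Finset.sum_comm]
  simp_rw [← Finset.mul_sum, (hη _).2, mul_one]

lemma IsSplitting.sum_weights_eq_one (h : IsSplitting θ φ η) (hθ : θ ∈ simplex n) :
    ∑ s, φ s = 1 := by
  rw [← sum_sum_mul_of_mem_simplex h.2.1, ← hθ.2]
  exact Finset.sum_congr rfl fun ω _ => h.2.2 ω

lemma IsSplitting.exists_fin_card_le (u : Fin n → A → ℝ) (μ : Fin n → ℝ)
    (h : IsSplitting θ φ η) :
    ∃ m ≤ n, ∃ (φ' : Fin m → ℝ) (e : Fin m → ι), IsSplitting θ φ' (fun s => η (e s)) ∧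
      ∑ i, φ i * weightedCost u μ θ (η i) ≤ ∑ s, φ' s * weightedCost u μ θ (η (e s)) := by
  let L := Fintype.linearCombination ℝ η
  let V := Fintype.linearCombination ℝ (fun i => weightedCost u μ θ (η i))
  have hL : ∀ d, L d = 0 → ∑ i, d i = 0 := by
    intro d hd
    rw [← sum_sum_mul_of_mem_simplex h.2.1]
    exact Finset.sum_eq_zero fun ω _ => by
      simpa [L, Fintype.linearCombination_apply] using congrFun hd ω
  obtain ⟨y, hy, hLy, hcard, hV⟩ := exists_nonneg_card_le_le_apply L hL V h.1
  obtain ⟨e, he⟩ := exists_fin_sum_mul_eq y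
  refine ⟨_, hcard.trans (Module.finrank_fin_fun ℝ).le, fun s => y (e s), e,
    ⟨fun s => hy _, fun s => h.2.1 _, fun ω => ?_⟩, ?_⟩
  · rw [he fun i => η i ω, ← h.2.2 ω]
    simpa [L, Fintype.linearCombination_apply] using congrFun hLy ω
  · rw [he fun i => weightedCost u μ θ (η i)]
    simpa [V, Fintype.linearCombination_apply] using hV

end Splitting

lemma continuous_weightedCost (u : Fin n → A → ℝ) (μ θ : Fin n → ℝ) :
    Continuous (weightedCost u μ θ) := by
  unfold weightedCost Ratio Cost
  refine .mul (by fun_prop) (.sub (by fun_prop) ?_)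
  exact Continuous.finset_sup'_apply _ fun a _ => by fun_prop

lemma le_one_of_mem_simplex {η : Fin n → ℝ} (hη : η ∈ simplex n) (ω : Fin n) : η ω ≤ 1 :=
  hη.2 ▸ Finset.single_le_sum (fun ω _ => hη.1 ω) (mem_univ ω)

lemma isClosed_simplex : IsClosed (simplex n) := by
  simp only [simplex, Set.ofPred_and, Set.ofPred_forall]
  exact (isClosed_iInter fun ω => isClosed_le (by fun_prop) (by fun_prop)).inter
    (isClosed_eq (by fun_prop) (by fun_prop))

lemma isCompact_setOf_isSplitting {θ : Fin n → ℝ} (hθ : θ ∈ simplex n) (m : ℕ) :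
    IsCompact {p : (Fin m → ℝ) × (Fin m → Fin n → ℝ) | IsSplitting θ p.1 p.2} := by
  refine (isCompact_Icc (a := (0, 0)) (b := (1, 1))).of_isClosed_subset ?_ ?_
  · simp only [IsSplitting, Set.ofPred_and, Set.ofPred_forall]
    exact (isClosed_iInter fun s => isClosed_le (by fun_prop) (by fun_prop)).inter
      ((isClosed_iInter fun s => isClosed_simplex.preimage (by fun_prop)).inter
        (isClosed_iInter fun ω => isClosed_eq (by fun_prop) (by fun_prop)))
  · intro p hp
    have hsum := hp.sum_weights_eq_one hθ
    exact ⟨⟨hp.1, fun s => (hp.2.1 s).1⟩,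
      fun s => (Finset.single_le_sum (fun s _ => hp.1 s) (mem_univ s)).trans hsum.le,
      fun s => le_one_of_mem_simplex (hp.2.1 s)⟩

lemma isSplitting_single {θ : Fin n → ℝ} (hθ : ∀ ω, 0 ≤ θ ω) :
    IsSplitting θ θ fun s => Pi.single s 1 :=
  ⟨hθ, fun s => ⟨fun ω => by simp [Pi.single_apply, apply_ite], by simp⟩,
    fun ω => by simp [Pi.single_apply]⟩

lemma exists_isGreatest_concaveSet (u : Fin n → A → ℝ) (μ : Fin n → ℝ) {θ : Fin n → ℝ}
    (hθ : θ ∈ simplex n) : ∃ v, IsGreatest (ConcaveSet u μ θ) v := by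
  let K : Set ℝ := ⋃ m ∈ Finset.range (n + 1),
    (fun p : (Fin m → ℝ) × (Fin m → Fin n → ℝ) => ∑ s, p.1 s * weightedCost u μ θ (p.2 s)) ''
      {p | IsSplitting θ p.1 p.2}
  have hK : IsCompact K := (Finset.range (n + 1)).isCompact_biUnion fun m _ =>
    (isCompact_setOf_isSplitting hθ m).image (by
      have := continuous_weightedCost u μ θ
      fun_prop)
  have hK_sub : K ⊆ ConcaveSet u μ θ := by
    simp only [K, Set.iUnion_subset_iff]
    rintro m - _ ⟨p, hp, rfl⟩
    exact mem_concaveSet_iff.mpr ⟨m, p.1, p.2, hp, rfl⟩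
  have hK_le : ∀ v ∈ ConcaveSet u μ θ, ∃ w ∈ K, v ≤ w := by
    intro v hv
    obtain ⟨m, φ, η, hsplit, rfl⟩ := mem_concaveSet_iff.mp hv
    obtain ⟨m', hm', φ', e, hsplit', hle⟩ := hsplit.exists_fin_card_le u μ
    exact ⟨_, Set.mem_biUnion (Finset.mem_range.mpr (Nat.lt_succ_of_le hm'))
      ⟨(φ', fun s => η (e s)), hsplit', rfl⟩, hle⟩
  obtain ⟨w₀, hw₀, -⟩ := hK_le _ (mem_concaveSet_iff.mpr ⟨n, _, _, isSplitting_single hθ.1, rfl⟩)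
  obtain ⟨v, hvK, hvmax⟩ := hK.exists_isGreatest ⟨w₀, hw₀⟩
  refine ⟨v, hK_sub hvK, fun w hw => ?_⟩
  obtain ⟨w', hw', hle⟩ := hK_le w hw
  exact hle.trans (hvmax hw')

lemma Cost_eq_zero_of_subsingleton [Subsingleton A] (u : Fin n → A → ℝ) (v : Fin n → ℝ) :
    Cost u v = 0 := by
  have : Unique A := uniqueOfSubsingleton (Classical.arbitrary A)
  simp [Cost, uStar]

lemma Cost_eq_of_forall_gap_eq (u : Fin n → A → ℝ) {v w : Fin n → ℝ}
    (h : ∀ b, ∑ ω, v ω * (uStar u ω - u ω b) = ∑ ω, w ω * (uStar u ω - u ω b)) :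
    Cost u v = Cost u w := by
  have hshift : ∀ b, ∑ ω, v ω * u ω b
      = ∑ ω, w ω * u ω b + (∑ ω, v ω * uStar u ω - ∑ ω, w ω * uStar u ω) := by
    intro b
    have := h b
    simp only [mul_sub, Finset.sum_sub_distrib] at this
    linarith
  simp only [Cost, hshift, ← Finset.sup'_add]
  ring

lemma Ratio_eq_linearCombination (μ θ v : Fin n → ℝ) :
    Ratio μ θ v = Fintype.linearCombination ℝ (fun ω => μ ω / θ ω) v := by
  simp only [Ratio, Fintype.linearCombination_apply, smul_eq_mul]
  exact Finset.sum_congr rfl fun ω _ => by ring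

lemma mem_convexHull_graphOn_of_linearMap {E : Type*} [AddCommGroup E] [Module ℝ E]
    [FiniteDimensional ℝ E] (L : (Fin n → ℝ) →ₗ[ℝ] E) (hL : ∀ d, L d = 0 → ∑ ω, d ω = 0)
    {f : (Fin n → ℝ) → ℝ} {η : Fin n → ℝ} (hf : ∀ y, L y = L η → f y = f η)
    (hη : η ∈ simplex n) :
    (η, f η) ∈ convexHull ℝ
      (Set.graphOn f {y ∈ simplex n | #{ω | y ω ≠ 0} ≤ Module.finrank ℝ E}) := by
  have hprod : (η, f η) ∈ convexHull ℝ
      ({y | 0 ≤ y ∧ L y = L η ∧ #{ω | y ω ≠ 0} ≤ Module.finrank ℝ E} ×ˢ {f η}) := by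
    rw [convexHull_prod, convexHull_singleton]
    exact ⟨mem_convexHull_nonneg_card_le L hL hη.1, rfl⟩
  refine convexHull_mono ?_ hprod
  rintro ⟨y, c⟩ ⟨⟨hy, hLy, hcard⟩, rfl : c = f η⟩
  have hsum : ∑ ω, (y - η) ω = 0 := hL _ (by rw [map_sub, hLy, sub_self])
  simp only [Pi.sub_apply, Finset.sum_sub_distrib, sub_eq_zero, hη.2] at hsum
  exact ⟨y, ⟨⟨hy, hsum⟩, hcard⟩, Prod.ext rfl (hf y hLy)⟩

/-- For `|A| ≥ 2` the constraints are mass, `R` and the regrets `Σ_ω η_ω (u*(ω) - u(ω, b))`, which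
determine `C = min_b (regret of b)`; for `|A| = 1` the cost vanishes and mass alone suffices. -/
lemma mem_convexHull_graphOn_weightedCost (u : Fin n → A → ℝ) (μ θ : Fin n → ℝ)
    {η : Fin n → ℝ} (hη : η ∈ simplex n) :
    (η, weightedCost u μ θ η) ∈ convexHull ℝ (Set.graphOn (weightedCost u μ θ)
      {y ∈ simplex n | #{ω | y ω ≠ 0} ≤ 2 * Fintype.card A}) := by
  let mass := Fintype.linearCombination ℝ (fun _ : Fin n => (1 : ℝ))
  have hmass : ∀ d, mass d = ∑ ω, d ω := by simp [mass, Fintype.linearCombination_apply]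
  rcases Nat.lt_or_ge 1 (Fintype.card A) with hA | hA
  · let L := mass.prod ((Fintype.linearCombination ℝ fun ω => μ ω / θ ω).prod
      (LinearMap.pi fun b => Fintype.linearCombination ℝ fun ω => uStar u ω - u ω b))
    have hrank : Module.finrank ℝ (ℝ × ℝ × (A → ℝ)) ≤ 2 * Fintype.card A := by
      simp only [Module.finrank_prod, Module.finrank_self, Module.finrank_fintype_fun_eq_card]
      omega
    refine convexHull_mono (Set.image_mono ?_)
      (mem_convexHull_graphOn_of_linearMap L (fun d hd => (hmass d).symm.trans ?_) ?_ hη)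
    · exact fun y hy => ⟨hy.1, hy.2.trans hrank⟩
    · exact congrArg Prod.fst hd
    · intro y hy
      simp only [L, LinearMap.prod_apply, Function.prod_apply, Prod.mk.injEq, funext_iff,
        LinearMap.pi_apply, Fintype.linearCombination_apply, smul_eq_mul] at hy
      rw [weightedCost, weightedCost, Ratio_eq_linearCombination, Ratio_eq_linearCombination,
        Cost_eq_of_forall_gap_eq u hy.2.2]
      simp only [Fintype.linearCombination_apply, smul_eq_mul, hy.2.1]
  · have : Subsingleton A := Fintype.card_le_one_iff_subsingleton.mp hA
    have hrank : Module.finrank ℝ ℝ ≤ 2 * Fintype.card A := by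
      rw [Module.finrank_self]
      have := Fintype.card_pos (α := A)
      omega
    refine convexHull_mono (Set.image_mono ?_)
      (mem_convexHull_graphOn_of_linearMap mass (fun d hd => (hmass d).symm.trans hd)
        (f := weightedCost u μ θ) (fun y _ => by simp [weightedCost, Cost_eq_zero_of_subsingleton])
        hη)
    exact fun y hy => ⟨hy.1, hy.2.trans hrank⟩

lemma IsSplitting.mem_convexHull_graphOn {ι : Type*} [Fintype ι] {θ : Fin n → ℝ} {φ : ι → ℝ}
    {η : ι → Fin n → ℝ} (h : IsSplitting θ φ η) (hθ : θ ∈ simplex n) (f : (Fin n → ℝ) → ℝ) :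
    (θ, ∑ s, φ s * f (η s)) ∈ convexHull ℝ (Set.graphOn f (simplex n)) := by
  have hcomb : (θ, ∑ s, φ s * f (η s)) = ∑ s, φ s • (η s, f (η s)) :=
    Prod.ext (funext fun ω => by simp [Prod.fst_sum, Finset.sum_apply, ← h.2.2 ω])
      (by simp [Prod.snd_sum])
  rw [hcomb]
  exact (convex_convexHull ℝ _).sum_mem (fun s _ => h.1 s) (h.sum_weights_eq_one hθ)
    fun s _ => subset_convexHull ℝ _ ⟨η s, h.2.1 s, rfl⟩

lemma exists_isSplitting_of_mem_convexHull_graphOn {f : (Fin n → ℝ) → ℝ}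
    {S : Set (Fin n → ℝ)} (hS : S ⊆ simplex n) {θ : Fin n → ℝ} {v : ℝ}
    (h : (θ, v) ∈ convexHull ℝ (Set.graphOn f S)) :
    ∃ (ι : Type) (_ : Fintype ι) (φ : ι → ℝ) (η : ι → Fin n → ℝ),
      IsSplitting θ φ η ∧ (∀ i, η i ∈ S) ∧ v = ∑ i, φ i * f (η i) := by
  obtain ⟨ι, _, φ, z, hφ, -, hz, hsum⟩ := mem_convexHull_iff_exists_fintype.mp h
  choose η hηS hηz using hz
  obtain rfl : z = fun i => (η i, f (η i)) := funext fun i => (hηz i).symm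
  refine ⟨ι, inferInstance, φ, η, ⟨hφ, fun i => hS (hηS i), fun ω => ?_⟩, hηS, ?_⟩
  · simpa [Prod.fst_sum, Finset.sum_apply] using congrFun (congrArg Prod.fst hsum) ω
  · simpa [Prod.snd_sum] using (congrArg Prod.snd hsum).symm

theorem stmt12_general (u : Fin n → A → ℝ)
    (μ θ : Fin n → ℝ) (hθ : θ ∈ simplex n) :
    ∃ (m : ℕ) (φ : Fin m → ℝ) (η : Fin m → Fin n → ℝ),
      m ≤ n ∧
      (∀ s, 0 ≤ φ s) ∧ (∀ s, η s ∈ simplex n) ∧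
      (∀ ω, ∑ s, φ s * η s ω = θ ω) ∧
      (∑ s, φ s * Ratio μ θ (η s) * Cost u (η s)) = sSup (ConcaveSet u μ θ) ∧
      (∀ s, (Finset.univ.filter (fun ω => η s ω ≠ 0)).card ≤ 2 * Fintype.card A) := by
  obtain ⟨v, hv, hv_max⟩ := exists_isGreatest_concaveSet u μ hθ
  obtain ⟨m, φ, η, hsplit, rfl⟩ := mem_concaveSet_iff.mp hv
  have hsparse : convexHull ℝ (Set.graphOn (weightedCost u μ θ) (simplex n)) ⊆
      convexHull ℝ (Set.graphOn (weightedCost u μ θ)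
        {y ∈ simplex n | #{ω | y ω ≠ 0} ≤ 2 * Fintype.card A}) :=
    convexHull_min (fun _ ⟨η, hη, hp⟩ => hp ▸ mem_convexHull_graphOn_weightedCost u μ θ hη)
      (convex_convexHull ℝ _)
  obtain ⟨ι, _, φ₁, η₁, hsplit₁, hsparse₁, hval₁⟩ :=
    exists_isSplitting_of_mem_convexHull_graphOn (fun _ h => h.1)
      (hsparse (hsplit.mem_convexHull_graphOn hθ _))
  obtain ⟨m', hm', φ', e, hsplit', hle⟩ := hsplit₁.exists_fin_card_le u μ
  refine ⟨m', φ', fun s => η₁ (e s), hm', hsplit'.1, hsplit'.2.1, hsplit'.2.2, ?_,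
    fun s => (hsparse₁ (e s)).2⟩
  rw [IsGreatest.csSup_eq ⟨hv, hv_max⟩]
  simp only [mul_assoc]
  exact le_antisymm (hv_max (mem_concaveSet_iff.mpr ⟨m', φ', _, hsplit', rfl⟩)) (hval₁ ▸ hle)

/-- there is a feasible family attaining the supremum of the single-type
problem with at most `n` signals in which every posterior has at most `2·|A|` nonzero
coordinates. -/
theorem stmt12 (hn : 1 ≤ n) (u : Fin n → A → ℝ)
    (μ θ : Fin n → ℝ) (hμ : μ ∈ simplex n) (hθ : θ ∈ simplex n)
    (hθpos : ∀ ω, 0 < θ ω) :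
    ∃ (m : ℕ) (φ : Fin m → ℝ) (η : Fin m → Fin n → ℝ),
      m ≤ n ∧
      (∀ s, 0 ≤ φ s) ∧ (∀ s, η s ∈ simplex n) ∧
      (∀ ω, ∑ s, φ s * η s ω = θ ω) ∧
      (∑ s, φ s * Ratio μ θ (η s) * Cost u (η s)) = sSup (ConcaveSet u μ θ) ∧
      (∀ s, (Finset.univ.filter (fun ω => η s ω ≠ 0)).card ≤ 2 * Fintype.card A) :=
  stmt12_general u μ θ hθ

end
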